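/- The folded hypercube FQ_n is bipartite if and only if n is odd. -/

import Mathlib

open SimpleGraph

/-- The `n`-dimensional hypercube: vertices are binary strings of length `n`
(indexed so that bit `i+1` of the paper is index `i`), adjacent iff they
differ in exactly one bit. -/
def hypercube (n : ℕ) : SimpleGraph (Fin n → Bool) where
  Adj u v := ∃! i, u i ≠ v i
  symm := by
    constructor
    rintro u v ⟨i, hi, hu⟩
    exact ⟨i, hi.symm, fun j hj => hu j hj.symm⟩
  loopless := by
    constructor
    rintro u ⟨i, hi, -⟩
    exact hi rfl

/-- Skip relation: `u` and `v` differ exactly in the last `k` bits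
(indices `0, …, k-1`). -/
def skipRel (n k : ℕ) (u v : Fin n → Bool) : Prop :=
  u ≠ v ∧ ∀ i : Fin n, (i.val < k → u i ≠ v i) ∧ (k ≤ i.val → u i = v i)

/-- The enhanced hypercube `Q_{n,k}`: hypercube edges together with skip edges. -/
def enhanced (n k : ℕ) : SimpleGraph (Fin n → Bool) where
  Adj u v := (hypercube n).Adj u v ∨ skipRel n k u v
  symm := by
    constructor
    rintro u v (h | ⟨hne, h⟩)
    · exact Or.inl ((hypercube n).adj_symm h)
    · exact Or.inr ⟨hne.symm, fun i =>
        ⟨fun hi => ((h i).1 hi).symm, fun hi => ((h i).2 hi).symm⟩⟩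
  loopless := by
    constructor
    rintro u (h | ⟨hne, -⟩)
    · exact (hypercube n).loopless.irrefl u h
    · exact hne rfl

/-- The folded hypercube `FQ_n`: hypercube edges together with complementary edges. -/
def folded (n : ℕ) : SimpleGraph (Fin n → Bool) where
  Adj u v := (hypercube n).Adj u v ∨ (u ≠ v ∧ ∀ i, u i ≠ v i)
  symm := by
    constructor
    rintro u v (h | ⟨hne, h⟩)
    · exact Or.inl ((hypercube n).adj_symm h)
    · exact Or.inr ⟨hne.symm, fun i => (h i).symm⟩
  loopless := by
    constructor
    rintro u (h | ⟨hne, -⟩)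
    · exact (hypercube n).loopless.irrefl u h
    · exact hne rfl

/-- The Cartesian product `K₂ × G`: two copies of `G` joined by crossing edges. -/
def K2Prod {V : Type*} (G : SimpleGraph V) : SimpleGraph (Bool × V) :=
  (completeGraph Bool) □ G

/-- The edge `e` lies on a cycle of length `l` in `G`. -/
def EdgeOnCycle {V : Type*} (G : SimpleGraph V) (e : Sym2 V) (l : ℕ) : Prop :=
  ∃ (v : V) (c : G.Walk v v), c.IsCycle ∧ c.length = l ∧ e ∈ c.edges


open Finset

/-! The parity of the number of ones flips along every hypercube edge and changes by `n` along a
complementary edge, so it is a proper 2-colouring of `FQ_n` when `n` is odd. When `n` is even,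
the path `0⋯0 → 10⋯0 → 110⋯0 → ⋯ → 1⋯1` followed by the complementary edge back to `0⋯0` is a
closed walk of odd length `n + 1`. -/

variable {n : ℕ}

def onesParity (v : Fin n → Bool) : ZMod 2 := ∑ i, ((v i).toNat : ZMod 2)

lemma Bool.toNat_add_toNat_zmod_two (a b : Bool) :
    ((a.toNat : ZMod 2) + b.toNat) = if a = b then 0 else 1 := by
  cases a <;> cases b <;> decide

lemma onesParity_add_onesParity (u v : Fin n → Bool) :
    onesParity u + onesParity v = (#{i | u i ≠ v i} : ZMod 2) := by
  simp only [onesParity, ← sum_add_distrib, Bool.toNat_add_toNat_zmod_two, card_filter,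
    Nat.cast_sum]
  refine sum_congr rfl fun i _ => ?_
  by_cases h : u i = v i <;> simp [h]

lemma onesParity_add_onesParity_of_folded_adj (hodd : Odd n) {u v : Fin n → Bool}
    (h : (folded n).Adj u v) : onesParity u + onesParity v = 1 := by
  rw [onesParity_add_onesParity]
  rcases h with h | ⟨-, h⟩
  · rw [(Fintype.existsUnique_iff_card_one _).mp h, Nat.cast_one]
  · rw [filter_true_of_mem fun i _ => h i, card_univ, Fintype.card_fin,
      ZMod.natCast_eq_one_iff_odd]
    exact hodd

def foldedColoringOfOdd (hodd : Odd n) : (folded n).Coloring (ZMod 2) :=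
  Coloring.mk onesParity fun h heq => by
    simpa [heq, CharTwo.add_self_eq_zero] using onesParity_add_onesParity_of_folded_adj hodd h

def prefixOnes (n k : ℕ) : Fin n → Bool := fun i => decide (i.val < k)

lemma hypercube_adj_prefixOnes_succ {k : ℕ} (hk : k < n) :
    (hypercube n).Adj (prefixOnes n k) (prefixOnes n (k + 1)) :=
  ⟨⟨k, hk⟩, by simp [prefixOnes], fun j hj => Fin.ext <| by simp [prefixOnes] at hj ⊢; omega⟩

def prefixOnesWalk (n : ℕ) : ∀ k ≤ n, (hypercube n).Walk (prefixOnes n 0) (prefixOnes n k)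
  | 0, _ => .nil
  | k + 1, hk => (prefixOnesWalk n k (by omega)).concat (hypercube_adj_prefixOnes_succ hk)

lemma length_prefixOnesWalk : ∀ k (hk : k ≤ n), (prefixOnesWalk n k hk).length = k
  | 0, _ => rfl
  | k + 1, hk => by simp [prefixOnesWalk, length_prefixOnesWalk k]

lemma hypercube_le_folded : hypercube n ≤ folded n := fun _ _ => Or.inl

lemma folded_adj_prefixOnes (hn : 1 ≤ n) : (folded n).Adj (prefixOnes n n) (prefixOnes n 0) := by
  refine Or.inr ⟨fun h => ?_, fun i => by simp [prefixOnes]⟩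
  have := congrFun h ⟨0, hn⟩
  simp [prefixOnes] at this
  omega

def foldedLoop (hn : 1 ≤ n) : (folded n).Walk (prefixOnes n 0) (prefixOnes n 0) :=
  ((prefixOnesWalk n n le_rfl).mapLe hypercube_le_folded).concat (folded_adj_prefixOnes hn)

lemma length_foldedLoop (hn : 1 ≤ n) : (foldedLoop hn).length = n + 1 := by
  simp [foldedLoop, length_prefixOnesWalk]

/-- The folded hypercube `FQ_n` is bipartite if and only if `n` is odd. -/
theorem stmt10 (n : ℕ) (hn : 1 ≤ n) :
    (folded n).Colorable 2 ↔ Odd n := by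
  refine ⟨fun h => ?_, fun hodd => (foldedColoringOfOdd hodd).colorable.mono (ZMod.card 2).le⟩
  have heven := two_colorable_iff_forall_loop_even.mp h _ (foldedLoop hn)
  rw [length_foldedLoop, Nat.even_add_one] at heven
  exact Nat.not_even_iff_odd.mp heven
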